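/- arXiv:2103.15888 — 3 statements merged into one kernel-verified Lean document; each statement's English description precedes it below -/
import Mathlib

section
/- Let f(x,y) be μ_x-strongly convex in x, μ_y-strongly concave in y, and L-Lipschitz smooth. Then the primal function Φ(x) = max_y f(x,y) is differentiable with ∇Φ(x) = ∇_x f(x, y*(x)), is (2L²/μ_y)-Lipschitz smooth, and is μ_x-strongly convex. -/
/-! The maximiser `y*` is `(L/μy)`-Lipschitz: strong concavity of `f x₂` around its maximiser gives
`μy ‖y*(x₁) - y*(x₂)‖ ≤ ‖∇_y f(x₂, y*(x₁))‖`, and `∇_y f(x₁, y*(x₁)) = 0`, so this is at most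
`L ‖x₁ - x₂‖`. Hence `G x = ∇ₓ f(x, y*(x))` is `L (1 + L/μy)`-Lipschitz, and
`L (1 + L/μy) ≤ 2L²/μy` as `μy ≤ L`. By convexity in `x` and maximality of `y*`, the increments
of `Φ` are squeezed, `⟪G x, u - x⟫ ≤ Φ u - Φ x ≤ ⟪G u, u - x⟫`, so continuity of `G` makes `G x`
the gradient of `Φ` at `x` (Danskin). Strong convexity passes to the pointwise maximum `Φ` of the
strongly convex functions `f · y`. -/

open Set Filter Asymptotics InnerProductSpace

theorem ConvexOn.add_le_of_hasFDerivAt {E : Type*} [NormedAddCommGroup E] [NormedSpace ℝ E]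
    {s : Set E} {g : E → ℝ} {g' : E →L[ℝ] ℝ} {x y : E}
    (hg : ConvexOn ℝ s g) (hx : x ∈ s) (hy : y ∈ s) (hgx : HasFDerivAt g g' x) :
    g x + g' (y - x) ≤ g y := by
  let ℓ : ℝ →ᵃ[ℝ] E := AffineMap.lineMap x y
  have hderiv : HasDerivAt (g ∘ ℓ) (g' (y - x)) 0 :=
    hgx.comp_hasDerivAt_of_eq 0 AffineMap.hasDerivAt_lineMap (by simp [ℓ])
  have := (hg.comp_affineMap ℓ).le_slope_of_hasDerivAt (x := 0) (y := 1)
    (by simpa [ℓ] using hx) (by simpa [ℓ] using hy) one_pos hderiv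
  simp only [slope_def_field, Function.comp_apply, ℓ, AffineMap.lineMap_apply_zero,
    AffineMap.lineMap_apply_one, sub_zero, div_one] at this
  linarith

theorem uniformConvexOn_of_le_of_attained {E ι : Type*} [NormedAddCommGroup E] [NormedSpace ℝ E]
    {s : Set E} {φ : ℝ → ℝ} {g : ι → E → ℝ} {Φ : E → ℝ} (hg : ∀ i, UniformConvexOn s φ (g i))
    (hle : ∀ i, ∀ x ∈ s, g i x ≤ Φ x) (hattained : ∀ x ∈ s, ∃ i, g i x = Φ x) :
    UniformConvexOn s φ Φ := by
  have hs : Convex ℝ s := fun x hx => (hg (hattained x hx).choose).1 hx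
  refine ⟨hs, fun x hx y hy a b ha hb hab => ?_⟩
  obtain ⟨i, hi⟩ := hattained _ (hs hx hy ha hb hab)
  have := (hg i).2 hx hy ha hb hab
  rw [← hi]
  simp only [smul_eq_mul] at this ⊢
  nlinarith [mul_le_mul_of_nonneg_left (hle i x hx) ha, mul_le_mul_of_nonneg_left (hle i y hy) hb]

section Gradient

variable {E : Type*} [NormedAddCommGroup E] [InnerProductSpace ℝ E] [CompleteSpace E]

theorem IsLocalMax.gradient_eq_zero {g : E → ℝ} {a : E} (h : IsLocalMax g a) :
    gradient g a = 0 := by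
  rw [gradient, h.fderiv_eq_zero, map_zero]

theorem ConvexOn.add_inner_le_of_hasGradientAt {s : Set E} {g : E → ℝ} {g' x y : E}
    (hg : ConvexOn ℝ s g) (hx : x ∈ s) (hy : y ∈ s) (hgx : HasGradientAt g g' x) :
    g x + ⟪g', y - x⟫_ℝ ≤ g y :=
  hg.add_le_of_hasFDerivAt hx hy hgx.hasFDerivAt

theorem StrongConvexOn.add_inner_add_le_of_hasGradientAt {s : Set E} {m : ℝ} {g : E → ℝ}
    {g' x y : E} (hg : StrongConvexOn s m g) (hx : x ∈ s) (hy : y ∈ s)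
    (hgx : HasGradientAt g g' x) :
    g x + ⟪g', y - x⟫_ℝ + m / 2 * ‖y - x‖ ^ 2 ≤ g y := by
  have := (strongConvexOn_iff_convex.1 hg).add_le_of_hasFDerivAt hx hy
    (hgx.hasFDerivAt.sub ((hasStrictFDerivAt_norm_sq x).hasFDerivAt.const_mul (m / 2)))
  simp only [sub_apply, smul_apply, toDual_apply_apply, innerSL_apply_apply, smul_eq_mul,
    nsmul_eq_mul, ← real_inner_self_eq_norm_sq] at this ⊢
  simp only [inner_sub_left, inner_sub_right, real_inner_comm x y] at this ⊢
  linarith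

theorem StrongConcaveOn.le_add_inner_sub_of_hasGradientAt {s : Set E} {m : ℝ} {g : E → ℝ}
    {g' x y : E} (hg : StrongConcaveOn s m g) (hx : x ∈ s) (hy : y ∈ s)
    (hgx : HasGradientAt g g' x) :
    g y ≤ g x + ⟪g', y - x⟫_ℝ - m / 2 * ‖y - x‖ ^ 2 := by
  have hneg : HasGradientAt (-g) (-g') x :=
    hasGradientAt_iff_hasFDerivAt.2 (by rw [map_neg]; exact hgx.hasFDerivAt.neg)
  have := StrongConvexOn.add_inner_add_le_of_hasGradientAt hg.neg hx hy hneg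
  simp only [Pi.neg_apply, inner_neg_left] at this
  linarith

theorem StrongConcaveOn.mul_norm_sub_le_norm_gradient {g : E → ℝ} {μ : ℝ} {y₀ y : E}
    (hg : StrongConcaveOn univ μ g) (hmax : IsMaxOn g univ y₀)
    (hd₀ : DifferentiableAt ℝ g y₀) (hd : DifferentiableAt ℝ g y) :
    μ * ‖y - y₀‖ ≤ ‖gradient g y‖ := by
  have hgrad₀ : HasGradientAt g 0 y₀ := by
    simpa [(hmax.isLocalMax univ_mem).gradient_eq_zero] using hd₀.hasGradientAt
  have hgrowth := hg.le_add_inner_sub_of_hasGradientAt (mem_univ y₀) (mem_univ y) hgrad₀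
  have hback := hg.le_add_inner_sub_of_hasGradientAt (mem_univ y) (mem_univ y₀) hd.hasGradientAt
  have hcs := real_inner_le_norm (gradient g y) (y₀ - y)
  rw [inner_zero_left] at hgrowth
  rw [norm_sub_rev y₀ y] at hback hcs
  have hsq : μ * ‖y - y₀‖ * ‖y - y₀‖ ≤ ‖gradient g y‖ * ‖y - y₀‖ := by nlinarith
  rcases (norm_nonneg (y - y₀)).eq_or_lt with h0 | hpos
  · rw [← h0, mul_zero]
    exact norm_nonneg _
  · exact le_of_mul_le_mul_right hsq hpos

theorem hasGradientAt_of_inner_le_sub_le_inner {Φ : E → ℝ} {G : E → E} {x : E}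
    (hG : ContinuousAt G x) (hlow : ∀ u, ⟪G x, u - x⟫_ℝ ≤ Φ u - Φ x)
    (hup : ∀ u, Φ u - Φ x ≤ ⟪G u, u - x⟫_ℝ) :
    HasGradientAt Φ (G x) x := by
  rw [hasGradientAt_iff_isLittleO, isLittleO_iff]
  intro c hc
  filter_upwards [Metric.continuousAt_iff'.1 hG c hc] with u hu
  rw [Real.norm_of_nonneg (by linarith [hlow u])]
  calc Φ u - Φ x - ⟪G x, u - x⟫_ℝ ≤ ⟪G u - G x, u - x⟫_ℝ := by
        rw [inner_sub_left]; linarith [hup u]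
    _ ≤ ‖G u - G x‖ * ‖u - x‖ := real_inner_le_norm _ _
    _ ≤ c * ‖u - x‖ := by
      rw [← dist_eq_norm]
      exact mul_le_mul_of_nonneg_right hu.le (norm_nonneg _)

end Gradient

theorem norm_argmax_sub_le {E F : Type*} [NormedAddCommGroup E] [NormedAddCommGroup F]
    [InnerProductSpace ℝ F] [CompleteSpace F] {f : E → F → ℝ} {ystar : E → F} {L μ : ℝ}
    (hμ : 0 < μ) (hdiff : ∀ x, Differentiable ℝ (f x))
    (hsc : ∀ x, StrongConcaveOn univ μ (f x))
    (hLip : ∀ x₁ x₂ y, ‖gradient (f x₁) y - gradient (f x₂) y‖ ≤ L * ‖x₁ - x₂‖)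
    (hystar : ∀ x, IsMaxOn (f x) univ (ystar x)) (x₁ x₂ : E) :
    ‖ystar x₁ - ystar x₂‖ ≤ L / μ * ‖x₁ - x₂‖ := by
  have hgrad₁ : gradient (f x₁) (ystar x₁) = 0 :=
    ((hystar x₁).isLocalMax univ_mem).gradient_eq_zero
  have := calc μ * ‖ystar x₁ - ystar x₂‖ ≤ ‖gradient (f x₂) (ystar x₁)‖ :=
        (hsc x₂).mul_norm_sub_le_norm_gradient (hystar x₂) (hdiff x₂ _) (hdiff x₂ _)
    _ = ‖gradient (f x₂) (ystar x₁) - gradient (f x₁) (ystar x₁)‖ := by rw [hgrad₁, sub_zero]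
    _ ≤ L * ‖x₁ - x₂‖ := by rw [norm_sub_rev x₁]; exact hLip _ _ _
  rw [div_mul_eq_mul_div, le_div_iff₀ hμ]
  linarith

theorem hasGradientAt_comp_argmax {E F : Type*} [NormedAddCommGroup E] [InnerProductSpace ℝ E]
    [CompleteSpace E] {f : E → F → ℝ} {ystar : E → F}
    (hdiff : ∀ y, Differentiable ℝ (fun x => f x y))
    (hconv : ∀ y, ConvexOn ℝ univ (fun x => f x y)) (hystar : ∀ x, IsMaxOn (f x) univ (ystar x))
    {x : E} (hG : ContinuousAt (fun z => gradient (fun u => f u (ystar z)) z) x) :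
    HasGradientAt (fun u => f u (ystar u)) (gradient (fun u => f u (ystar x)) x) x := by
  have hsub : ∀ y z u, ⟪gradient (fun u => f u y) z, u - z⟫_ℝ ≤ f u y - f z y := fun y z u => by
    linarith [(hconv y).add_inner_le_of_hasGradientAt (mem_univ z) (mem_univ u)
      (hdiff y z).hasGradientAt]
  have hmax : ∀ x y, f x y ≤ f x (ystar x) := fun x => isMaxOn_univ_iff.1 (hystar x)
  refine hasGradientAt_of_inner_le_sub_le_inner
    (G := fun z => gradient (fun u => f u (ystar z)) z) hG (fun u => ?_) (fun u => ?_)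
  · linarith [hsub (ystar x) x u, hmax u (ystar x)]
  · have := hsub (ystar u) u x
    rw [← neg_sub u x, inner_neg_right] at this
    linarith [hmax x (ystar u)]

/-- If `f(x,y)` is `μx`-strongly convex in `x`, `μy`-strongly concave in `y`,
and `L`-Lipschitz smooth, then the primal function `Φ(x) = max_y f(x,y) = f(x, y*(x))` is
differentiable with `∇Φ(x) = ∇ₓ f(x, y*(x))`, is `(2L²/μy)`-Lipschitz smooth, and is
`μx`-strongly convex. -/
theorem primal_function_properties
    {E F : Type*} [NormedAddCommGroup E] [InnerProductSpace ℝ E] [CompleteSpace E]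
    [NormedAddCommGroup F] [InnerProductSpace ℝ F] [CompleteSpace F]
    (f : E → F → ℝ) (L μx μy : ℝ) (hμx : 0 < μx) (hμy : 0 < μy) (hLμ : μy ≤ L)
    (hdiffx : ∀ y, Differentiable ℝ (fun x => f x y))
    (hdiffy : ∀ x, Differentiable ℝ (f x))
    (hscx : ∀ y, StrongConvexOn Set.univ μx (fun x => f x y))
    (hscy : ∀ x, StrongConcaveOn Set.univ μy (f x))
    (hLip : ∀ (x₁ x₂ : E) (y₁ y₂ : F),
      ‖gradient (fun x => f x y₁) x₁ - gradient (fun x => f x y₂) x₂‖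
        ≤ L * (‖x₁ - x₂‖ + ‖y₁ - y₂‖) ∧
      ‖gradient (f x₁) y₁ - gradient (f x₂) y₂‖
        ≤ L * (‖x₁ - x₂‖ + ‖y₁ - y₂‖))
    (ystar : E → F) (hystar : ∀ x, IsMaxOn (f x) Set.univ (ystar x)) :
    (∀ x : E, HasGradientAt (fun u => f u (ystar u))
        (gradient (fun u => f u (ystar x)) x) x) ∧
    (∀ x₁ x₂ : E,
      ‖gradient (fun u => f u (ystar u)) x₁ - gradient (fun u => f u (ystar u)) x₂‖
        ≤ (2 * L ^ 2 / μy) * ‖x₁ - x₂‖) ∧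
    StrongConvexOn Set.univ μx (fun u => f u (ystar u)) := by
  have hL : 0 < L := hμy.trans_le hLμ
  have hystar_lip := norm_argmax_sub_le hμy hdiffy hscy
    (fun x₁ x₂ y => by simpa using (hLip x₁ x₂ y y).2) hystar
  have hG : ∀ x₁ x₂ : E, ‖gradient (fun u => f u (ystar x₁)) x₁
      - gradient (fun u => f u (ystar x₂)) x₂‖ ≤ (2 * L ^ 2 / μy) * ‖x₁ - x₂‖ := fun x₁ x₂ => by
    have hL_le : L ≤ L ^ 2 / μy := by
      rw [le_div_iff₀ hμy, sq]; exact mul_le_mul_of_nonneg_left hLμ hL.le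
    calc _ ≤ L * (‖x₁ - x₂‖ + ‖ystar x₁ - ystar x₂‖) := (hLip _ _ _ _).1
      _ ≤ L * (‖x₁ - x₂‖ + L / μy * ‖x₁ - x₂‖) := by gcongr; exact hystar_lip x₁ x₂
      _ = (L + L ^ 2 / μy) * ‖x₁ - x₂‖ := by ring
      _ ≤ (L ^ 2 / μy + L ^ 2 / μy) * ‖x₁ - x₂‖ := by gcongr
      _ = (2 * L ^ 2 / μy) * ‖x₁ - x₂‖ := by ring
  have hgrad : ∀ x, HasGradientAt (fun u => f u (ystar u))
      (gradient (fun u => f u (ystar x)) x) x := fun x =>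
    hasGradientAt_comp_argmax hdiffx (fun y => (hscx y).convexOn fun r => by positivity) hystar
      (LipschitzWith.of_dist_le' (by simpa only [dist_eq_norm] using hG)).continuous.continuousAt
  refine ⟨hgrad, fun x₁ x₂ => ?_, uniformConvexOn_of_le_of_attained hscx
    (fun y x _ => isMaxOn_univ_iff.1 (hystar x) y) (fun x _ => ⟨ystar x, rfl⟩)⟩
  rw [(hgrad x₁).gradient, (hgrad x₂).gradient]
  exact hG x₁ x₂
end

section
/- Zero-chain property of F_d: define X_k = span{e_1,…,e_k} ⊂ ℝ^{d+1} and Y_k = span{ê_{d+2},…,ê_{d−k+2}} ⊂ ℝ^{d+2} (with X_0 = Y_0 = {0}). Then: (a) if x = 0 and y = 0 then ∇_x F_d ∈ X_1 and ∇_y F_d = 0; (b) if x ∈ X_k and y ∈ Y_k then ∇_x F_d(x,y) ∈ X_{k+1} and ∇_y F_d(x,y) ∈ Y_k; (c) if x ∈ X_{k+1} and y ∈ Y_k then ∇_x F_d(x,y) ∈ X_{k+1} and ∇_y F_d(x,y) ∈ Y_{k+1}. -/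
/-!
The gradients are `∇ₓF_d(x,y) = λ₁ B_dᵀ y − c₀ e₁ + c₁ ∑ᵢ Γ'(xᵢ) eᵢ − 2 c₂ x_{d+1} e_{d+1}`
(with the constants `c₀, c₁, c₂` of `F_d`) and `∇_yF_d(x,y) = λ₁ B_d x − 2λ₂ y`. In 0-indexed
coordinates the nonzero entries `(i, j)` of `B_d` satisfy `d ≤ i + j ≤ d + 1`, so `B_d` maps `X_k`
into `Y_k` and `B_dᵀ` maps `Y_k` into `X_{k+1}`. The separable terms never leave `X_k` because
`Γ'(0) = 0` and `t ↦ 2t` vanishes at `0`, and the `e₁`-term lies in `X_1`. The three claims then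
follow from the monotonicity of `X_k` and `Y_k`.
-/

open scoped BigOperators

/-- The matrix `B_d ∈ ℝ^{(d+2)×(d+1)}` of the hard instance (0-indexed):
`(B_d x)_0 = x_d`, `(B_d x)_i = x_{d-i} − x_{d-i+1}` for `1 ≤ i ≤ d`, and
`(B_d x)_{d+1} = α^{1/4} x_0`. -/
noncomputable def Bmat (d : ℕ) (α : ℝ) : Matrix (Fin (d + 2)) (Fin (d + 1)) ℝ :=
  fun i j =>
    if (i : ℕ) = 0 then (if (j : ℕ) = d then 1 else 0)
    else if (i : ℕ) = d + 1 then (if (j : ℕ) = 0 then α ^ ((1 : ℝ) / 4) else 0)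
    else if (j : ℕ) = d - (i : ℕ) then 1
    else if (j : ℕ) = d - (i : ℕ) + 1 then -1
    else 0

/-- The linear action of `B_d` as a map between Euclidean spaces. -/
noncomputable def Bapp (d : ℕ) (α : ℝ) (x : EuclideanSpace ℝ (Fin (d + 1))) :
    EuclideanSpace ℝ (Fin (d + 2)) :=
  (EuclideanSpace.equiv (Fin (d + 2)) ℝ).symm
    ((Bmat d α).mulVec ((EuclideanSpace.equiv (Fin (d + 1)) ℝ) x))

/-- `Γ(t) = 120 ∫_1^t s²(s−1)/(1+s²) ds`, the nonconvex component of the hard instance. -/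
noncomputable def Gam (t : ℝ) : ℝ := 120 * ∫ s in (1 : ℝ)..t, s ^ 2 * (s - 1) / (1 + s ^ 2)

/-- The NC-SC hard instance `F_d`. -/
noncomputable def Fd (d : ℕ) (α lam1 lam2 : ℝ) (x : EuclideanSpace ℝ (Fin (d + 1)))
    (y : EuclideanSpace ℝ (Fin (d + 2))) : ℝ :=
  lam1 * (inner ℝ (Bapp d α x) y : ℝ) - lam2 * ‖y‖ ^ 2
    - lam1 ^ 2 * Real.sqrt α / (2 * lam2) * x 0
    + lam1 ^ 2 * α / (2 * lam2) * ∑ i : Fin d, Gam (x i.castSucc)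
    - lam1 ^ 2 * α / (4 * lam2) * (x (Fin.last d)) ^ 2
    + lam1 ^ 2 * Real.sqrt α / (4 * lam2)

/-- `X_k = span{e_1, …, e_k}` (0-indexed: coordinates `< k`). -/
noncomputable def Xsub (d k : ℕ) : Submodule ℝ (EuclideanSpace ℝ (Fin (d + 1))) :=
  Submodule.span ℝ {v | ∃ i : Fin (d + 1), (i : ℕ) < k ∧ v = EuclideanSpace.single i 1}

/-- `Y_k = span{ê_{d+2}, …, ê_{d−k+2}}` (0-indexed: coordinates `j` with `j + k ≥ d + 1`). -/
noncomputable def Ysub (d k : ℕ) : Submodule ℝ (EuclideanSpace ℝ (Fin (d + 2))) :=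
  Submodule.span ℝ {v | ∃ j : Fin (d + 2), d + 1 ≤ (j : ℕ) + k ∧ v = EuclideanSpace.single j 1}

open scoped RealInnerProductSpace Matrix

section GradientCalculus

variable {F : Type*} [NormedAddCommGroup F] [InnerProductSpace ℝ F] [CompleteSpace F]
  {f g : F → ℝ} {f' g' x : F}

theorem HasGradientAt.add (hf : HasGradientAt f f' x) (hg : HasGradientAt g g' x) :
    HasGradientAt (fun x => f x + g x) (f' + g') x := by
  rw [hasGradientAt_iff_hasFDerivAt, map_add] at *
  exact hf.fun_add hg

theorem HasGradientAt.sub (hf : HasGradientAt f f' x) (hg : HasGradientAt g g' x) :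
    HasGradientAt (fun x => f x - g x) (f' - g') x := by
  rw [hasGradientAt_iff_hasFDerivAt, map_sub] at *
  exact hf.fun_sub hg

theorem HasGradientAt.const_mul (c : ℝ) (hf : HasGradientAt f f' x) :
    HasGradientAt (fun x => c * f x) (c • f') x := by
  rw [hasGradientAt_iff_hasFDerivAt, map_smul] at *
  exact hf.const_mul c

theorem HasGradientAt.add_const (c : ℝ) (hf : HasGradientAt f f' x) :
    HasGradientAt (fun x => f x + c) f' x := by
  rw [hasGradientAt_iff_hasFDerivAt] at *
  exact hf.add_const c

theorem HasGradientAt.sub_const (c : ℝ) (hf : HasGradientAt f f' x) :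
    HasGradientAt (fun x => f x - c) f' x := by
  rw [hasGradientAt_iff_hasFDerivAt] at *
  exact hf.sub_const c

theorem HasGradientAt.sum {ι : Type*} {u : Finset ι} {A : ι → F → ℝ} {A' : ι → F}
    (h : ∀ i ∈ u, HasGradientAt (A i) (A' i) x) :
    HasGradientAt (fun x => ∑ i ∈ u, A i x) (∑ i ∈ u, A' i) x := by
  simp only [hasGradientAt_iff_hasFDerivAt, map_sum] at *
  exact HasFDerivAt.fun_sum h

theorem HasDerivAt.comp_hasGradientAt {h : ℝ → ℝ} {h' : ℝ} (hh : HasDerivAt h h' (f x))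
    (hf : HasGradientAt f f' x) : HasGradientAt (fun x => h (f x)) (h' • f') x := by
  rw [hasGradientAt_iff_hasFDerivAt, map_smul] at *
  exact hh.comp_hasFDerivAt x hf

theorem hasGradientAt_inner_left (a x : F) : HasGradientAt (fun x => ⟪a, x⟫) a x := by
  rw [hasGradientAt_iff_hasFDerivAt]
  exact (InnerProductSpace.toDual ℝ F a).hasFDerivAt

theorem hasGradientAt_norm_sq (x : F) : HasGradientAt (fun x => ‖x‖ ^ 2) ((2 : ℝ) • x) x := by
  rw [hasGradientAt_iff_hasFDerivAt, map_smul, ofNat_smul_eq_nsmul]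
  exact (hasStrictFDerivAt_norm_sq x).hasFDerivAt

end GradientCalculus

theorem EuclideanSpace.mem_span_single_iff {ι 𝕜 : Type*} [Fintype ι] [DecidableEq ι] [RCLike 𝕜]
    (P : ι → Prop) (x : EuclideanSpace 𝕜 ι) :
    x ∈ Submodule.span 𝕜 {v | ∃ i, P i ∧ v = EuclideanSpace.single i 1} ↔
      ∀ i, ¬ P i → x i = 0 := by
  have hset : {v | ∃ i, P i ∧ v = EuclideanSpace.single i (1 : 𝕜)} =
      (EuclideanSpace.basisFun ι 𝕜).toBasis '' {i | P i} := by
    ext v; simp [eq_comm]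
  rw [hset, Module.Basis.mem_span_image]
  simp [Set.subset_def, not_imp_comm]

theorem EuclideanSpace.hasGradientAt_apply {ι : Type*} [Fintype ι] [DecidableEq ι] (j : ι)
    (x : EuclideanSpace ℝ ι) : HasGradientAt (fun x => x j) (EuclideanSpace.single j 1) x := by
  have h : InnerProductSpace.toDual ℝ _ (EuclideanSpace.single j 1) = EuclideanSpace.proj j := by
    ext v; simp [EuclideanSpace.inner_single_left]
  rw [hasGradientAt_iff_hasFDerivAt, h]
  exact (EuclideanSpace.proj (𝕜 := ℝ) j).hasFDerivAt

theorem mem_Xsub_iff {d k : ℕ} {x : EuclideanSpace ℝ (Fin (d + 1))} :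
    x ∈ Xsub d k ↔ ∀ j : Fin (d + 1), k ≤ j → x j = 0 := by
  simp [Xsub, EuclideanSpace.mem_span_single_iff]

theorem mem_Ysub_iff {d k : ℕ} {y : EuclideanSpace ℝ (Fin (d + 2))} :
    y ∈ Ysub d k ↔ ∀ i : Fin (d + 2), i + k < d + 1 → y i = 0 := by
  simp [Ysub, EuclideanSpace.mem_span_single_iff]

theorem Xsub_mono {d k l : ℕ} (h : k ≤ l) : Xsub d k ≤ Xsub d l :=
  Submodule.span_mono fun _ ⟨i, hi, hv⟩ => ⟨i, hi.trans_le h, hv⟩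

theorem Ysub_mono {d k l : ℕ} (h : k ≤ l) : Ysub d k ≤ Ysub d l :=
  Submodule.span_mono fun _ ⟨i, hi, hv⟩ => ⟨i, hi.trans (by omega), hv⟩

theorem single_mem_Xsub {d k : ℕ} {j : Fin (d + 1)} (hj : (j : ℕ) < k) :
    EuclideanSpace.single j 1 ∈ Xsub d k :=
  Submodule.subset_span ⟨j, hj, rfl⟩

theorem smul_single_mem_Xsub {d k : ℕ} {x : EuclideanSpace ℝ (Fin (d + 1))} (hx : x ∈ Xsub d k)
    {f : ℝ → ℝ} (hf : f 0 = 0) (j : Fin (d + 1)) :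
    f (x j) • EuclideanSpace.single j 1 ∈ Xsub d k := by
  rcases lt_or_ge (j : ℕ) k with hj | hj
  · exact Submodule.smul_mem _ _ (single_mem_Xsub hj)
  · rw [mem_Xsub_iff.1 hx j hj, hf, zero_smul]
    exact Submodule.zero_mem _

theorem Bmat_eq_zero {d : ℕ} (α : ℝ) {i : Fin (d + 2)} {j : Fin (d + 1)}
    (h : (i : ℕ) + j < d ∨ d + 1 < (i : ℕ) + j) : Bmat d α i j = 0 := by
  unfold Bmat
  split_ifs <;> first | rfl | omega

theorem Bapp_apply (d : ℕ) (α : ℝ) (x : EuclideanSpace ℝ (Fin (d + 1))) (i : Fin (d + 2)) :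
    Bapp d α x i = ∑ j : Fin (d + 1), Bmat d α i j * x j := rfl

theorem Bapp_eq_toEuclideanLin (d : ℕ) (α : ℝ) :
    Bapp d α = Matrix.toEuclideanLin (Bmat d α) := rfl

theorem Bapp_mem_Ysub {d k : ℕ} (α : ℝ) {x : EuclideanSpace ℝ (Fin (d + 1))} (hx : x ∈ Xsub d k) :
    Bapp d α x ∈ Ysub d k := by
  rw [mem_Ysub_iff]
  intro i hi
  rw [Bapp_apply]
  refine Finset.sum_eq_zero fun j _ => ?_
  rcases lt_or_ge (j : ℕ) k with hj | hj
  · rw [Bmat_eq_zero α (by omega), zero_mul]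
  · rw [mem_Xsub_iff.1 hx j hj, mul_zero]

theorem transpose_mem_Xsub {d k : ℕ} (α : ℝ) {y : EuclideanSpace ℝ (Fin (d + 2))}
    (hy : y ∈ Ysub d k) : Matrix.toEuclideanLin (Bmat d α)ᵀ y ∈ Xsub d (k + 1) := by
  rw [mem_Xsub_iff]
  intro j hj
  simp only [Matrix.ofLp_toLpLin, Matrix.toLin'_apply, Matrix.mulVec, dotProduct]
  refine Finset.sum_eq_zero fun i _ => ?_
  rcases lt_or_ge ((i : ℕ) + k) (d + 1) with hi | hi
  · rw [mem_Ysub_iff.1 hy i hi, mul_zero]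
  · rw [Matrix.transpose_apply, Bmat_eq_zero α (by omega), zero_mul]

theorem inner_Bapp (d : ℕ) (α : ℝ) (x : EuclideanSpace ℝ (Fin (d + 1)))
    (y : EuclideanSpace ℝ (Fin (d + 2))) :
    ⟪Bapp d α x, y⟫ = ⟪Matrix.toEuclideanLin (Bmat d α)ᵀ y, x⟫ := by
  rw [real_inner_comm, Bapp_eq_toEuclideanLin, ← Matrix.conjTranspose_eq_transpose_of_trivial,
    Matrix.toEuclideanLin_conjTranspose_eq_adjoint, LinearMap.adjoint_inner_left]

theorem hasDerivAt_Gam (t : ℝ) : HasDerivAt Gam (120 * (t ^ 2 * (t - 1) / (1 + t ^ 2))) t := by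
  have hc : Continuous fun s : ℝ => s ^ 2 * (s - 1) / (1 + s ^ 2) :=
    .div (by fun_prop) (by fun_prop) fun s => by positivity
  exact (hc.integral_hasStrictDerivAt 1 t).hasDerivAt.const_mul 120

theorem deriv_Gam_zero : deriv Gam 0 = 0 := by
  simp [(hasDerivAt_Gam 0).deriv]

section Gradients

variable (d : ℕ) (α lam1 lam2 : ℝ) (x : EuclideanSpace ℝ (Fin (d + 1)))
  (y : EuclideanSpace ℝ (Fin (d + 2)))

theorem hasGradientAt_Fd_fst :
    HasGradientAt (fun x' => Fd d α lam1 lam2 x' y)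
      (lam1 • (Bmat d α)ᵀ.toEuclideanLin y
        - (lam1 ^ 2 * √α / (2 * lam2)) • EuclideanSpace.single 0 1
        + (lam1 ^ 2 * α / (2 * lam2)) •
          ∑ i : Fin d, deriv Gam (x i.castSucc) • EuclideanSpace.single i.castSucc 1
        - (lam1 ^ 2 * α / (4 * lam2)) •
          (2 * x (Fin.last d)) • EuclideanSpace.single (Fin.last d) 1) x := by
  have hGam (t : ℝ) : HasDerivAt Gam (deriv Gam t) t :=
    (hasDerivAt_Gam t).differentiableAt.hasDerivAt
  have hsq (t : ℝ) : HasDerivAt (· ^ 2) (2 * t) t := by simpa using hasDerivAt_pow 2 t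
  simp only [Fd, inner_Bapp]
  exact ((((((hasGradientAt_inner_left _ x).const_mul lam1).sub_const _).sub
    ((EuclideanSpace.hasGradientAt_apply 0 x).const_mul _)).add
    ((HasGradientAt.sum fun (i : Fin d) _ =>
      (hGam _).comp_hasGradientAt (EuclideanSpace.hasGradientAt_apply i.castSucc x)).const_mul _)).sub
    (((hsq _).comp_hasGradientAt
      (EuclideanSpace.hasGradientAt_apply (Fin.last d) x)).const_mul _)).add_const _

theorem hasGradientAt_Fd_snd :
    HasGradientAt (Fd d α lam1 lam2 x) (lam1 • Bapp d α x - lam2 • (2 : ℝ) • y) y := by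
  unfold Fd
  exact ((((((hasGradientAt_inner_left (Bapp d α x) y).const_mul lam1).sub
    ((hasGradientAt_norm_sq y).const_mul lam2)).sub_const _).add_const _).sub_const _).add_const _

end Gradients

section ZeroChain

variable {d k : ℕ} (α lam1 lam2 : ℝ) {x : EuclideanSpace ℝ (Fin (d + 1))}
  {y : EuclideanSpace ℝ (Fin (d + 2))}

theorem gradient_Fd_fst_mem (hx : x ∈ Xsub d (k + 1)) (hy : y ∈ Ysub d k) :
    gradient (fun x' => Fd d α lam1 lam2 x' y) x ∈ Xsub d (k + 1) := by
  rw [(hasGradientAt_Fd_fst d α lam1 lam2 x y).gradient]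
  refine sub_mem (add_mem (sub_mem ?_ ?_) ?_) ?_
  · exact Submodule.smul_mem _ _ (transpose_mem_Xsub α hy)
  · exact Submodule.smul_mem _ _ (single_mem_Xsub k.succ_pos)
  · exact Submodule.smul_mem _ _ <| Submodule.sum_mem _ fun i _ =>
      smul_single_mem_Xsub hx deriv_Gam_zero _
  · exact Submodule.smul_mem _ _ (smul_single_mem_Xsub hx (f := (2 * ·)) (mul_zero 2) _)

theorem gradient_Fd_snd_mem (hx : x ∈ Xsub d k) (hy : y ∈ Ysub d k) :
    gradient (Fd d α lam1 lam2 x) y ∈ Ysub d k := by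
  rw [(hasGradientAt_Fd_snd d α lam1 lam2 x y).gradient]
  exact sub_mem (Submodule.smul_mem _ _ (Bapp_mem_Ysub α hx))
    (Submodule.smul_mem _ _ (Submodule.smul_mem _ _ hy))

end ZeroChain

theorem Fd_zero_chain_general (d : ℕ) (α lam1 lam2 : ℝ) :
    (gradient (fun x => Fd d α lam1 lam2 x 0) 0 ∈ Xsub d 1 ∧
      gradient (Fd d α lam1 lam2 0) 0 = 0) ∧
    (∀ (k : ℕ) (x : EuclideanSpace ℝ (Fin (d + 1))) (y : EuclideanSpace ℝ (Fin (d + 2))),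
      x ∈ Xsub d k → y ∈ Ysub d k →
        gradient (fun x' => Fd d α lam1 lam2 x' y) x ∈ Xsub d (k + 1) ∧
        gradient (Fd d α lam1 lam2 x) y ∈ Ysub d k) ∧
    (∀ (k : ℕ) (x : EuclideanSpace ℝ (Fin (d + 1))) (y : EuclideanSpace ℝ (Fin (d + 2))),
      x ∈ Xsub d (k + 1) → y ∈ Ysub d k →
        gradient (fun x' => Fd d α lam1 lam2 x' y) x ∈ Xsub d (k + 1) ∧
        gradient (Fd d α lam1 lam2 x) y ∈ Ysub d (k + 1)) := by
  refine ⟨⟨?_, ?_⟩, fun k x y hx hy => ⟨?_, ?_⟩, fun k x y hx hy => ⟨?_, ?_⟩⟩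
  · exact gradient_Fd_fst_mem (k := 0) α lam1 lam2 (zero_mem _) (zero_mem _)
  · simp [(hasGradientAt_Fd_snd d α lam1 lam2 0 0).gradient, Bapp_eq_toEuclideanLin]
  · exact gradient_Fd_fst_mem α lam1 lam2 (Xsub_mono k.le_succ hx) hy
  · exact gradient_Fd_snd_mem α lam1 lam2 hx hy
  · exact gradient_Fd_fst_mem α lam1 lam2 hx hy
  · exact gradient_Fd_snd_mem α lam1 lam2 hx (Ysub_mono k.le_succ hy)

/-- Alternating zero-chain property of `F_d`:
(a) at `x = 0, y = 0` the `x`-gradient lies in `X_1` and the `y`-gradient vanishes;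
(b) if `x ∈ X_k` and `y ∈ Y_k`, then `∇ₓF_d(x,y) ∈ X_{k+1}` and `∇_yF_d(x,y) ∈ Y_k`;
(c) if `x ∈ X_{k+1}` and `y ∈ Y_k`, then `∇ₓF_d(x,y) ∈ X_{k+1}` and `∇_yF_d(x,y) ∈ Y_{k+1}`. -/
theorem Fd_zero_chain (d : ℕ) (α lam1 lam2 : ℝ)
    (hα : α ∈ Set.Icc (0 : ℝ) 1) (h1 : 0 < lam1) (h2 : 0 < lam2) :
    (gradient (fun x => Fd d α lam1 lam2 x 0) 0 ∈ Xsub d 1 ∧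
      gradient (Fd d α lam1 lam2 0) 0 = 0) ∧
    (∀ (k : ℕ) (x : EuclideanSpace ℝ (Fin (d + 1))) (y : EuclideanSpace ℝ (Fin (d + 2))),
      x ∈ Xsub d k → y ∈ Ysub d k →
        gradient (fun x' => Fd d α lam1 lam2 x' y) x ∈ Xsub d (k + 1) ∧
        gradient (Fd d α lam1 lam2 x) y ∈ Ysub d k) ∧
    (∀ (k : ℕ) (x : EuclideanSpace ℝ (Fin (d + 1))) (y : EuclideanSpace ℝ (Fin (d + 2))),
      x ∈ Xsub d (k + 1) → y ∈ Ysub d k →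
        gradient (fun x' => Fd d α lam1 lam2 x' y) x ∈ Xsub d (k + 1) ∧
        gradient (Fd d α lam1 lam2 x) y ∈ Ysub d (k + 1)) :=
  Fd_zero_chain_general d α lam1 lam2
end

section
/- Moreau-envelope descent bound for the catalyst outer loop: let Φ be L-weakly convex (e.g., Φ = max_y f(x,y) for L-smooth f, so Φ is 2κL-smooth and in particular L-weakly convex after rescaling), define Φ̂_t(x) = Φ(x) + L‖x − x^t‖², which is L-strongly convex with minimizer x̂^t = prox_{Φ/2L}(x^t), and let ∇Φ_{1/2L}(x^t) = 2L(x^t − x̂^t) be the Moreau-envelope gradient. If Φ̂_t(x^{t+1}) ≤ Φ̂_t(x̂^t) + b_{t+1}, then ‖∇Φ_{1/2L}(x^t)‖² ≤ 8L[Φ(x^t) − Φ(x^{t+1}) + b_{t+1}]. -/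
open Filter Set Topology

section UniformConvex

variable {E : Type*} [NormedAddCommGroup E] [NormedSpace ℝ E] {s : Set E} {f : E → ℝ} {x y : E}

/-- Comparing `f` at the minimizer `y` with `f` at `t • x + (1 - t) • y` gives
`(1 - t) * φ ‖x - y‖ ≤ f x - f y` for `t ∈ (0, 1)`; let `t → 0`. -/
lemma UniformConvexOn.le_sub_of_isMinOn {φ : ℝ → ℝ} (hf : UniformConvexOn s φ f)
    (hmin : IsMinOn f s y) (hy : y ∈ s) (hx : x ∈ s) :
    φ ‖x - y‖ ≤ f x - f y := by
  have along_segment : ∀ t ∈ Ioo (0 : ℝ) 1, (1 - t) * φ ‖x - y‖ ≤ f x - f y := by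
    rintro t ⟨ht₀, ht₁⟩
    have hconv := hf.2 hx hy ht₀.le (sub_nonneg.2 ht₁.le) (add_sub_cancel t 1)
    have hmin_t : f y ≤ f (t • x + (1 - t) • y) :=
      hmin (hf.1 hx hy ht₀.le (sub_nonneg.2 ht₁.le) (add_sub_cancel t 1))
    simp only [smul_eq_mul] at hconv
    have : t * ((1 - t) * φ ‖x - y‖) ≤ t * (f x - f y) := by linarith
    exact le_of_mul_le_mul_left this ht₀
  have hlim : Tendsto (fun t : ℝ => (1 - t) * φ ‖x - y‖) (𝓝[Ioo 0 1] 0) (𝓝 (φ ‖x - y‖)) := by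
    have : Tendsto (fun t : ℝ => (1 - t) * φ ‖x - y‖) (𝓝 0) (𝓝 ((1 - 0) * φ ‖x - y‖)) :=
      (continuous_const.sub continuous_id |>.mul continuous_const).tendsto 0
    simpa using this.mono_left nhdsWithin_le_nhds
  have : (𝓝[Ioo (0 : ℝ) 1] 0).NeBot := left_nhdsWithin_Ioo_neBot zero_lt_one
  exact le_of_tendsto hlim (eventually_mem_nhdsWithin.mono along_segment)

lemma StrongConvexOn.le_sub_of_isMinOn {m : ℝ} (hf : StrongConvexOn s m f)
    (hmin : IsMinOn f s y) (hy : y ∈ s) (hx : x ∈ s) :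
    m / 2 * ‖x - y‖ ^ 2 ≤ f x - f y :=
  UniformConvexOn.le_sub_of_isMinOn hf hmin hy hx

end UniformConvex

theorem moreau_envelope_descent_general
    {E : Type*} [NormedAddCommGroup E] [InnerProductSpace ℝ E]
    (Φ : E → ℝ) (L : ℝ) (hL : 0 < L) (xt xnext xhat : E) (b : ℝ)
    (hconv : StrongConvexOn Set.univ L (fun x => Φ x + L * ‖x - xt‖ ^ 2))
    (hmin : IsMinOn (fun x => Φ x + L * ‖x - xt‖ ^ 2) Set.univ xhat)
    (hstep : Φ xnext + L * ‖xnext - xt‖ ^ 2 ≤ Φ xhat + L * ‖xhat - xt‖ ^ 2 + b) :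
    ‖(2 * L) • (xt - xhat)‖ ^ 2 ≤ 8 * L * (Φ xt - Φ xnext + b) := by
  have growth : L / 2 * ‖xt - xhat‖ ^ 2 ≤ Φ xt - (Φ xhat + L * ‖xhat - xt‖ ^ 2) := by
    simpa using hconv.le_sub_of_isMinOn hmin (mem_univ xhat) (mem_univ xt)
  have hprox_term : 0 ≤ L * ‖xnext - xt‖ ^ 2 := by positivity
  calc ‖(2 * L) • (xt - xhat)‖ ^ 2 = 8 * L * (L / 2 * ‖xt - xhat‖ ^ 2) := by
        rw [norm_smul, Real.norm_eq_abs, mul_pow, sq_abs]; ring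
    _ ≤ 8 * L * (Φ xt - (Φ xhat + L * ‖xhat - xt‖ ^ 2)) := by gcongr
    _ ≤ 8 * L * (Φ xt - Φ xnext + b) := by gcongr; linarith

/-- Moreau-envelope descent bound for the catalyst outer loop: let
`Φ̂_t(x) = Φ(x) + L‖x − xᵗ‖²` be `L`-strongly convex with minimizer
`x̂ᵗ = prox_{Φ/2L}(xᵗ)`, and suppose `Φ̂_t(xᵗ⁺¹) ≤ Φ̂_t(x̂ᵗ) + b`.  Then the
Moreau-envelope gradient `∇Φ_{1/2L}(xᵗ) = 2L(xᵗ − x̂ᵗ)` satisfies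
`‖∇Φ_{1/2L}(xᵗ)‖² ≤ 8L[Φ(xᵗ) − Φ(xᵗ⁺¹) + b]`. -/
theorem moreau_envelope_descent
    {E : Type*} [NormedAddCommGroup E] [InnerProductSpace ℝ E] [CompleteSpace E]
    (Φ : E → ℝ) (L : ℝ) (hL : 0 < L) (xt xnext xhat : E) (b : ℝ)
    (hconv : StrongConvexOn Set.univ L (fun x => Φ x + L * ‖x - xt‖ ^ 2))
    (hmin : IsMinOn (fun x => Φ x + L * ‖x - xt‖ ^ 2) Set.univ xhat)
    (hstep : Φ xnext + L * ‖xnext - xt‖ ^ 2 ≤ Φ xhat + L * ‖xhat - xt‖ ^ 2 + b) :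
    ‖(2 * L) • (xt - xhat)‖ ^ 2 ≤ 8 * L * (Φ xt - Φ xnext + b) :=
  moreau_envelope_descent_general Φ L hL xt xnext xhat b hconv hmin hstep
end
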